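/- The unbounded dwarfed d-cube has exactly 2^d + d·2^{d−1} + 1 faces (including the empty face and D itself): for d ≥ 1, let D = {y ∈ ℝ^d : (∀ i, 0 ≤ y i) ∧ ∀ i, (3/2) * y i − Σ_j y j ≤ 1}. Then Set.ncard {F : Set (EuclideanSpace ℝ (Fin d)) | IsExposed ℝ D F} = 2^d + d * 2^(d−1) + 1. -/

import Mathlib

/-!
A nonempty exposed face `F` of a polyhedron `{x | ∀ k, g k x ≤ b k}` is cut out by the
inequalities tight on all of `F`: averaging gives `z ∈ F` strict in every other inequality, so for
any `x` tight in those inequalities a short step from `z` away from `x` stays in the polyhedron,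
and since `z` then lies in an open segment from `x`, extremality of `F` puts `x` in `F`.
Conversely each such set is exposed by the sum of its tight functionals.

For the unbounded dwarfed cube, two dwarfing inequalities `3/2 y i - ∑ y ≤ 1` are never tight
at the same point, and a tight one forces `y i > 0`. So the nonempty faces are labelled by the set
`S` of vanishing coordinates together with at most one tight dwarfing inequality `i ∉ S`; the
points `0`, `2 e_i` and `4 e_i + e_j` show that distinct labels give distinct faces. There are
`2^d + d 2^(d-1)` labels, and the empty face adds one.
-/

open Finset Filter Topology

lemma IsExtreme.mem_of_add_smul_sub_mem {E : Type*} [AddCommGroup E] [Module ℝ E]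
    {A B : Set E} (hB : IsExtreme ℝ A B) {x z : E} {t : ℝ} (hx : x ∈ A) (hz : z ∈ B)
    (ht : 0 < t) (hu : z + t • (z - x) ∈ A) : x ∈ B := by
  refine hB.left_mem_of_mem_openSegment hx hu hz ⟨t / (1 + t), 1 / (1 + t), by positivity,
    by positivity, by field_simp; ring, ?_⟩
  match_scalars <;> field_simp; ring

section Polyhedron

variable {E ι : Type*} [AddCommGroup E] [Module ℝ E] [TopologicalSpace E]
  (g : ι → StrongDual ℝ E) (b : ι → ℝ)

def polyhedron : Set E := {x | ∀ k, g k x ≤ b k}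

def polyhedronFace (K : Finset ι) : Set E := {x ∈ polyhedron g b | ∀ k ∈ K, g k x = b k}

open Classical in
noncomputable def tightConstraints [Fintype ι] (F : Set E) : Finset ι :=
  {k | ∀ x ∈ F, g k x = b k}

lemma convex_polyhedron : Convex ℝ (polyhedron g b) := by
  simpa only [polyhedron, Set.ofPred_forall, ContinuousLinearMap.coe_coe] using
    convex_iInter fun k => convex_halfSpace_le (g k).isLinear (b k)

variable {g b}

lemma mem_tightConstraints [Fintype ι] {F : Set E} {k : ι} :
    k ∈ tightConstraints g b F ↔ ∀ x ∈ F, g k x = b k := by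
  simp [tightConstraints]

lemma isExposed_polyhedronFace (K : Finset ι) :
    IsExposed ℝ (polyhedron g b) (polyhedronFace g b K) := by
  rintro ⟨x₀, hx₀P, hx₀K⟩
  refine ⟨∑ k ∈ K, g k, Set.ext fun x => ⟨fun ⟨hxP, hxK⟩ => ⟨hxP, fun y hy => ?_⟩,
    fun ⟨hxP, hmax⟩ => ⟨hxP, ?_⟩⟩⟩
  · simp only [FunLike.coe_sum, Finset.sum_apply]
    rw [Finset.sum_congr rfl hxK]
    exact Finset.sum_le_sum fun k _ => hy k
  · have hle : ∑ k ∈ K, b k ≤ ∑ k ∈ K, g k x := by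
      simpa [Finset.sum_congr rfl hx₀K] using hmax x₀ hx₀P
    exact (Finset.sum_eq_sum_iff_of_le fun k _ => hxP k).1
      (le_antisymm (Finset.sum_le_sum fun k _ => hxP k) hle)

lemma tightConstraints_polyhedronFace [Fintype ι] {K : Finset ι}
    (h : ∀ k ∉ K, ∃ x ∈ polyhedronFace g b K, g k x ≠ b k) :
    tightConstraints g b (polyhedronFace g b K) = K := by
  ext k
  rw [mem_tightConstraints]
  refine ⟨fun hk => by_contra fun hkK => ?_, fun hk x hx => hx.2 k hk⟩
  obtain ⟨x, hx, hne⟩ := h k hkK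
  exact hne (hk x hx)

lemma Convex.exists_forall_lt_of_forall_exists_lt {C : Set E} (hC : Convex ℝ C)
    (hne : C.Nonempty) (hle : ∀ x ∈ C, ∀ k, g k x ≤ b k) (s : Finset ι)
    (hs : ∀ k ∈ s, ∃ x ∈ C, g k x < b k) : ∃ z ∈ C, ∀ k ∈ s, g k z < b k := by
  classical
  induction s using Finset.induction_on with
  | empty =>
    obtain ⟨z, hz⟩ := hne
    exact ⟨z, hz, by simp⟩
  | insert a s _ ih =>
    obtain ⟨z, hzC, hz⟩ := ih fun k hk => hs k (mem_insert_of_mem hk)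
    obtain ⟨v, hvC, hv⟩ := hs a (mem_insert_self a s)
    refine ⟨(1 / 2 : ℝ) • z + (1 / 2 : ℝ) • v,
      hC hzC hvC (by norm_num) (by norm_num) (by norm_num), fun k hk => ?_⟩
    have := hle z hzC k
    have := hle v hvC k
    simp only [map_add, map_smul, smul_eq_mul]
    rcases mem_insert.1 hk with rfl | hk
    · linarith
    · linarith [hz k hk]

lemma exists_pos_add_smul_sub_mem_polyhedron [Finite ι] {x z : E}
    (hz : z ∈ polyhedron g b) (hxz : ∀ k, g k z = b k → g k x = b k) :
    ∃ t : ℝ, 0 < t ∧ z + t • (z - x) ∈ polyhedron g b := by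
  have hev : ∀ᶠ t in 𝓝[>] (0 : ℝ), ∀ k, g k (z + t • (z - x)) ≤ b k := by
    refine eventually_all.2 fun k => ?_
    simp only [map_add, map_smul, map_sub, smul_eq_mul]
    rcases (hz k).eq_or_lt with hk | hk
    · exact Eventually.of_forall fun t => by rw [hk, hxz k hk]; simp
    · refine nhdsWithin_le_nhds (Eventually.mono ?_ fun t => le_of_lt)
      refine (Continuous.tendsto (by fun_prop) 0).eventually (gt_mem_nhds ?_)
      simpa using hk
  obtain ⟨t, htP, ht⟩ := (hev.and self_mem_nhdsWithin).exists
  exact ⟨t, ht, htP⟩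

lemma IsExposed.eq_polyhedronFace_tightConstraints [Fintype ι] {F : Set E}
    (hF : IsExposed ℝ (polyhedron g b) F) (hne : F.Nonempty) :
    F = polyhedronFace g b (tightConstraints g b F) := by
  classical
  refine subset_antisymm
    (fun x hx => ⟨hF.subset hx, fun k hk => mem_tightConstraints.1 hk x hx⟩) ?_
  rintro x ⟨hxP, hxT⟩
  obtain ⟨z, hzF, hz⟩ :=
    (hF.convex (convex_polyhedron g b)).exists_forall_lt_of_forall_exists_lt hne
      (fun y hy => hF.subset hy) (univ.filter (· ∉ tightConstraints g b F)) fun k hk => by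
        obtain ⟨y, hyF, hy⟩ := not_forall₂.1 (mt mem_tightConstraints.2 (mem_filter.1 hk).2)
        exact ⟨y, hyF, ((hF.subset hyF) k).lt_of_ne hy⟩
  obtain ⟨t, ht, hu⟩ := exists_pos_add_smul_sub_mem_polyhedron (x := x) (hF.subset hzF)
    fun k hk => hxT k <| by_contra fun hkT => (hz k (by simpa using hkT)).ne hk
  exact hF.isExtreme.mem_of_add_smul_sub_mem hxP hzF ht hu

end Polyhedron

lemma Finset.exists_toFinset_eq_of_subsingleton {α : Type*} {s : Finset α}
    (hs : (s : Set α).Subsingleton) : ∃ o : Option α, o.toFinset = s := by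
  rcases s.eq_empty_or_nonempty with rfl | ⟨a, ha⟩
  · exact ⟨none, rfl⟩
  · exact ⟨some a, (eq_singleton_iff_unique_mem.2 ⟨ha, fun b hb => hs hb ha⟩).symm⟩

lemma card_finset_notMem {α : Type*} [Fintype α] [DecidableEq α] (a : α) :
    #{s : Finset α | a ∉ s} = 2 ^ (Fintype.card α - 1) := by
  rw [show ({s | a ∉ s} : Finset (Finset α)) = (univ.erase a).powerset by
    ext s; simp [subset_erase]]
  simp

section DwarfedCube

variable {d : ℕ}

local notation "ℝ^" d => EuclideanSpace ℝ (Fin d)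

noncomputable def dwarfedConstraint (d : ℕ) : Fin d ⊕ Fin d → StrongDual ℝ (ℝ^d) :=
  Sum.elim (fun j => -EuclideanSpace.proj j)
    fun i => (3 / 2 : ℝ) • EuclideanSpace.proj i - ∑ j, EuclideanSpace.proj j

def dwarfedBound (d : ℕ) : Fin d ⊕ Fin d → ℝ := Sum.elim 0 1

noncomputable def dwarfedCube (d : ℕ) : Set (ℝ^d) :=
  polyhedron (dwarfedConstraint d) (dwarfedBound d)

noncomputable def dwarfedFace (S : Finset (Fin d)) (o : Option (Fin d)) : Set (ℝ^d) :=
  polyhedronFace (dwarfedConstraint d) (dwarfedBound d) (S.disjSum o.toFinset)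

/-- The labels of the nonempty faces: `dwarfedFace S (some i)` is empty when `i ∈ S`. -/
def dwarfedFaceLabels (d : ℕ) : Set (Finset (Fin d) × Option (Fin d)) :=
  {p | ∀ i ∈ p.2, i ∉ p.1}

@[simp] lemma dwarfedConstraint_inl (j : Fin d) (x : ℝ^d) :
    dwarfedConstraint d (.inl j) x = -x j := by
  simp [dwarfedConstraint]

@[simp] lemma dwarfedConstraint_inr (i : Fin d) (x : ℝ^d) :
    dwarfedConstraint d (.inr i) x = 3 / 2 * x i - ∑ j, x j := by
  simp [dwarfedConstraint]

@[simp] lemma dwarfedBound_inl (j : Fin d) : dwarfedBound d (.inl j) = 0 := rfl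

@[simp] lemma dwarfedBound_inr (i : Fin d) : dwarfedBound d (.inr i) = 1 := rfl

lemma mem_dwarfedCube {x : ℝ^d} :
    x ∈ dwarfedCube d ↔ (∀ i, 0 ≤ x i) ∧ ∀ i, 3 / 2 * x i - ∑ j, x j ≤ 1 := by
  simp [dwarfedCube, polyhedron]

lemma mem_dwarfedFace {x : ℝ^d} {S : Finset (Fin d)} {o : Option (Fin d)} :
    x ∈ dwarfedFace S o ↔ x ∈ dwarfedCube d ∧ (∀ j ∈ S, x j = 0) ∧
      ∀ i ∈ o, 3 / 2 * x i - ∑ j, x j = 1 := by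
  simp only [dwarfedFace, polyhedronFace, Sum.forall, Set.mem_ofPred_eq, inl_mem_disjSum,
    inr_mem_disjSum, Option.mem_toFinset, dwarfedConstraint_inl, dwarfedConstraint_inr,
    dwarfedBound_inl, dwarfedBound_inr, neg_eq_zero]
  rfl

lemma eq_of_dwarfing_tight {x : ℝ^d} (hx : x ∈ dwarfedCube d) {i j : Fin d}
    (hi : 3 / 2 * x i - ∑ k, x k = 1) (hj : 3 / 2 * x j - ∑ k, x k = 1) : i = j := by
  by_contra hij
  have hpair : x i + x j ≤ ∑ k, x k := by
    rw [← sum_pair hij]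
    exact sum_le_sum_of_subset_of_nonneg (subset_univ _) fun k _ _ => (mem_dwarfedCube.1 hx).1 k
  have hsum : 0 ≤ ∑ k, x k := sum_nonneg fun k _ => (mem_dwarfedCube.1 hx).1 k
  linarith

lemma pos_of_dwarfing_tight {x : ℝ^d} (hx : x ∈ dwarfedCube d) {i : Fin d}
    (hi : 3 / 2 * x i - ∑ k, x k = 1) : 0 < x i := by
  have hsum : 0 ≤ ∑ k, x k := sum_nonneg fun k _ => (mem_dwarfedCube.1 hx).1 k
  linarith

lemma exists_eq_dwarfedFace {F : Set (ℝ^d)} (hF : IsExposed ℝ (dwarfedCube d) F)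
    (hne : F.Nonempty) : ∃ p ∈ dwarfedFaceLabels d, F = dwarfedFace p.1 p.2 := by
  set K := tightConstraints (dwarfedConstraint d) (dwarfedBound d) F
  obtain ⟨x₀, hx₀⟩ := hne
  have hx₀K : ∀ k ∈ K, dwarfedConstraint d k x₀ = dwarfedBound d k :=
    fun k hk => mem_tightConstraints.1 hk x₀ hx₀
  have hx₀D : x₀ ∈ dwarfedCube d := hF.subset hx₀
  obtain ⟨o, ho⟩ : ∃ o : Option (Fin d), o.toFinset = K.toRight :=
    exists_toFinset_eq_of_subsingleton fun i hi j hj =>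
      eq_of_dwarfing_tight hx₀D (by simpa using hx₀K _ (mem_toRight.1 hi))
        (by simpa using hx₀K _ (mem_toRight.1 hj))
  refine ⟨(K.toLeft, o), fun i hi hiK => ?_, ?_⟩
  · have hpos := pos_of_dwarfing_tight hx₀D
      (by simpa using hx₀K _ (mem_toRight.1 (ho ▸ Option.mem_toFinset.2 hi)))
    have hzero : x₀ i = 0 := by simpa using hx₀K _ (mem_toLeft.1 hiK)
    linarith
  · rw [dwarfedFace, ho, toLeft_disjSum_toRight]
    exact hF.eq_polyhedronFace_tightConstraints ⟨x₀, hx₀⟩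

lemma zero_mem_dwarfedFace_none (S : Finset (Fin d)) : (0 : ℝ^d) ∈ dwarfedFace S none := by
  simp [mem_dwarfedFace, mem_dwarfedCube]

lemma single_two_mem_dwarfedFace {S : Finset (Fin d)} {o : Option (Fin d)} {i : Fin d}
    (hi : i ∉ S) (ho : ∀ k ∈ o, k = i) :
    EuclideanSpace.single i (2 : ℝ) ∈ dwarfedFace S o := by
  refine mem_dwarfedFace.2 ⟨mem_dwarfedCube.2 ⟨fun k => ?_, fun k => ?_⟩, fun j hj => ?_,
    fun k hk => ?_⟩
  all_goals simp only [PiLp.single_apply, sum_ite_eq', mem_univ, if_true]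
  · split_ifs <;> norm_num
  · split_ifs <;> norm_num
  · rw [if_neg (ne_of_mem_of_not_mem hj hi)]
  · rw [if_pos (ho k hk)]; norm_num

lemma single_four_add_single_one_mem_dwarfedFace {S : Finset (Fin d)} {i j : Fin d}
    (hi : i ∉ S) (hj : j ∉ S) (hij : j ≠ i) :
    EuclideanSpace.single i (4 : ℝ) + EuclideanSpace.single j 1 ∈ dwarfedFace S (some i) := by
  have hsum :
      ∑ k, (EuclideanSpace.single i (4 : ℝ) + EuclideanSpace.single j 1 : ℝ^d) k = 5 := by
    simp only [PiLp.add_apply, sum_add_distrib, PiLp.single_apply, sum_ite_eq',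
      mem_univ, if_true]
    norm_num
  refine mem_dwarfedFace.2 ⟨mem_dwarfedCube.2 ⟨fun k => ?_, fun k => ?_⟩, fun k hk => ?_,
    fun k hk => ?_⟩
  · simp only [PiLp.add_apply, PiLp.single_apply]
    split_ifs <;> norm_num
  · rw [hsum]
    simp only [PiLp.add_apply, PiLp.single_apply]
    rcases eq_or_ne k i with rfl | hki
    · rw [if_pos rfl, if_neg hij.symm]; norm_num
    · rw [if_neg hki]; split_ifs <;> norm_num
  · simp only [PiLp.add_apply, PiLp.single_apply]
    rw [if_neg (ne_of_mem_of_not_mem hk hi), if_neg (ne_of_mem_of_not_mem hk hj)]; norm_num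
  · rw [hsum, ← Option.mem_some_iff.1 hk]
    simp only [PiLp.add_apply, PiLp.single_apply, if_pos, if_neg hij.symm]
    norm_num

lemma tightConstraints_dwarfedFace {p : Finset (Fin d) × Option (Fin d)}
    (hp : p ∈ dwarfedFaceLabels d) :
    tightConstraints (dwarfedConstraint d) (dwarfedBound d) (dwarfedFace p.1 p.2) =
      p.1.disjSum p.2.toFinset := by
  obtain ⟨S, o⟩ := p
  refine tightConstraints_polyhedronFace ?_
  rintro (j | k) hk
  · replace hk : j ∉ S := by simpa using hk
    cases o with
    | none => exact ⟨_, single_two_mem_dwarfedFace hk (by simp), by simp⟩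
    | some i =>
      by_cases hji : j = i
      · subst hji
        exact ⟨_, single_two_mem_dwarfedFace hk (by simp), by simp⟩
      · exact ⟨_, single_four_add_single_one_mem_dwarfedFace (hp i rfl) hk hji, by simp [hji]⟩
  · replace hk : k ∉ o := by simpa using hk
    cases o with
    | none => exact ⟨0, zero_mem_dwarfedFace_none S, by simp⟩
    | some i =>
      refine ⟨_, single_two_mem_dwarfedFace (hp i rfl) (by simp), ?_⟩
      rw [dwarfedConstraint_inr, PiLp.single_apply, if_neg (Ne.symm (by simpa using hk))]
      norm_num

lemma dwarfedFace_nonempty {p : Finset (Fin d) × Option (Fin d)}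
    (hp : p ∈ dwarfedFaceLabels d) : (dwarfedFace p.1 p.2).Nonempty := by
  obtain ⟨S, _ | i⟩ := p
  · exact ⟨0, zero_mem_dwarfedFace_none S⟩
  · exact ⟨_, single_two_mem_dwarfedFace (hp i rfl) (by simp)⟩

lemma injOn_dwarfedFace : Set.InjOn (fun p => dwarfedFace p.1 p.2) (dwarfedFaceLabels d) := by
  intro p hp q hq hpq
  have h := tightConstraints_dwarfedFace hp
  rw [show dwarfedFace p.1 p.2 = dwarfedFace q.1 q.2 from hpq, tightConstraints_dwarfedFace hq,
    disjSum_inj] at h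
  obtain ⟨hS, ho⟩ := h
  refine Prod.ext hS.symm ?_
  cases hpo : p.2 <;> cases hqo : q.2 <;> simp_all

lemma setOf_isExposed_dwarfedCube :
    {F | IsExposed ℝ (dwarfedCube d) F} =
      insert ∅ ((fun p => dwarfedFace p.1 p.2) '' dwarfedFaceLabels d) := by
  ext F
  refine ⟨fun hF => ?_, ?_⟩
  · rcases F.eq_empty_or_nonempty with rfl | hne
    · exact Set.mem_insert _ _
    · obtain ⟨p, hp, rfl⟩ := exists_eq_dwarfedFace hF hne
      exact Set.mem_insert_of_mem _ ⟨p, hp, rfl⟩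
  · rintro (rfl | ⟨p, -, rfl⟩)
    · exact isExposed_empty
    · exact isExposed_polyhedronFace _

lemma ncard_dwarfedFaceLabels : (dwarfedFaceLabels d).ncard = 2 ^ d + d * 2 ^ (d - 1) := by
  classical
  rw [dwarfedFaceLabels, Set.ncard_eq_toFinset_card', Set.toFinset_ofPred, card_filter,
    Fintype.sum_prod_type_right, Fintype.sum_option]
  simp only [Option.mem_def, reduceCtorEq, false_imp_iff, implies_true, if_true,
    Option.some.injEq, forall_eq', ← card_filter, card_finset_notMem]
  simp

end DwarfedCube

theorem stmt_12_general (d : ℕ)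
    (D : Set (EuclideanSpace ℝ (Fin d)))
    (hD : D = {y : EuclideanSpace ℝ (Fin d) |
      (∀ i, 0 ≤ y i) ∧ ∀ i, (3 / 2) * y i - ∑ j, y j ≤ 1}) :
    Set.ncard {F : Set (EuclideanSpace ℝ (Fin d)) | IsExposed ℝ D F} =
      2 ^ d + d * 2 ^ (d - 1) + 1 := by
  obtain rfl : D = dwarfedCube d := hD.trans (Set.ext fun _ => mem_dwarfedCube.symm)
  rw [setOf_isExposed_dwarfedCube, Set.ncard_insert_of_notMem, injOn_dwarfedFace.ncard_image,
    ncard_dwarfedFaceLabels]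
  rintro ⟨p, hp, hempty⟩
  exact (dwarfedFace_nonempty hp).ne_empty hempty

/-- For `d ≥ 1`, the unbounded dwarfed `d`-cube has exactly
`2^d + d·2^(d−1) + 1` exposed faces (including `∅` and `D` itself). -/
theorem stmt_12 (d : ℕ) (hd : 1 ≤ d)
    (D : Set (EuclideanSpace ℝ (Fin d)))
    (hD : D = {y : EuclideanSpace ℝ (Fin d) |
      (∀ i, 0 ≤ y i) ∧ ∀ i, (3 / 2) * y i - ∑ j, y j ≤ 1}) :
    Set.ncard {F : Set (EuclideanSpace ℝ (Fin d)) | IsExposed ℝ D F} =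
      2 ^ d + d * 2 ^ (d - 1) + 1 :=
  stmt_12_general d D hD
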